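/- Let R be a Γ-graded integral domain, ⋆ a homogeneous star operation on R, and ★ any classical star operation on R such that A^★ = A^⋆ for every nonzero homogeneous fractional ideal A. Then ★ ≤ e(⋆), i.e., A^★ ⊆ A^{e(⋆)} for every nonzero fractional ideal A of R. Thus e(⋆) is the largest extension of ⋆ to a classical star operation. -/

import Mathlib

/-!
For `0 ≠ z ∈ (R : A)` the integral ideal `zA` lies in the homogeneous ideal `C(zA)`, on which `★`
and `⋆` agree. Hence `A^★ = z⁻¹ (zA)^★ ⊆ z⁻¹ C(zA)^★ = z⁻¹ C(zA)^⋆`, and intersecting over all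
such `z` gives `A^★ ⊆ A^{e(⋆)}`.
-/

open FractionalIdeal
open scoped Classical

section Setup

variable {Γ : Type*} [AddCommMonoid Γ] [LinearOrder Γ] [IsOrderedCancelAddMonoid Γ] [DecidableEq Γ]
  {R : Type*} [CommRing R] [IsDomain R]
  (𝒜 : Γ → AddSubgroup R) [GradedRing 𝒜]
  (K : Type*) [Field K] [Algebra R K] [IsFractionRing R K]

/-- The integral ideal corresponding to a fractional ideal contained in `R`. -/
def idealOf (J : FractionalIdeal (nonZeroDivisors R) K) : Ideal R :=
  (J : Submodule R K).comap (Algebra.linearMap R K)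

/-- An integral ideal is homogeneous if it contains all homogeneous components of its elements. -/
def IsHomIdeal (I : Ideal R) : Prop := ∀ f ∈ I, ∀ γ : Γ, GradedRing.proj 𝒜 γ f ∈ I

/-- `C(I)`: the homogeneous ideal generated by the homogeneous components of elements of `I`. -/
def homC (I : Ideal R) : Ideal R :=
  Ideal.span {x | ∃ f ∈ I, ∃ γ : Γ, x = GradedRing.proj 𝒜 γ f}

/-- `C(J)` for a fractional ideal `J ⊆ R`, as a fractional ideal. -/
def Cfrac (J : FractionalIdeal (nonZeroDivisors R) K) : FractionalIdeal (nonZeroDivisors R) K :=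
  ↑(homC 𝒜 (idealOf K J))

/-- A fractional ideal is homogeneous if some nonzero homogeneous `s ∈ R` multiplies it into a
homogeneous integral ideal. -/
def IsHomFrac (A : FractionalIdeal (nonZeroDivisors R) K) : Prop :=
  ∃ s : R, s ≠ 0 ∧ SetLike.IsHomogeneousElem 𝒜 s ∧
    spanSingleton (nonZeroDivisors R) (algebraMap R K s) * A ≤ 1 ∧
    IsHomIdeal 𝒜 (idealOf K (spanSingleton (nonZeroDivisors R) (algebraMap R K s) * A))

/-- A homogeneous element of the homogeneous quotient field, viewed inside `K`. -/
def IsHomElem (x : K) : Prop :=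
  ∃ a b : R, SetLike.IsHomogeneousElem 𝒜 a ∧ SetLike.IsHomogeneousElem 𝒜 b ∧ b ≠ 0 ∧
    x * algebraMap R K b = algebraMap R K a

end Setup

/-- A homogeneous star operation on the graded domain `R`. -/
structure HomStarOp {Γ : Type*} [AddCommMonoid Γ] [LinearOrder Γ] [IsOrderedCancelAddMonoid Γ] [DecidableEq Γ]
    {R : Type*} [CommRing R] [IsDomain R] (𝒜 : Γ → AddSubgroup R) [GradedRing 𝒜]
    (K : Type*) [Field K] [Algebra R K] [IsFractionRing R K] where
  toFun : FractionalIdeal (nonZeroDivisors R) K → FractionalIdeal (nonZeroDivisors R) K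
  hom : ∀ A, A ≠ 0 → IsHomFrac 𝒜 K A → IsHomFrac 𝒜 K (toFun A)
  map_span : ∀ x : K, x ≠ 0 → IsHomElem 𝒜 K x →
    toFun (spanSingleton (nonZeroDivisors R) x) = spanSingleton (nonZeroDivisors R) x
  map_smul : ∀ x : K, x ≠ 0 → IsHomElem 𝒜 K x → ∀ A, A ≠ 0 → IsHomFrac 𝒜 K A →
    toFun (spanSingleton (nonZeroDivisors R) x * A) = spanSingleton (nonZeroDivisors R) x * toFun A
  le_star : ∀ A, A ≠ 0 → IsHomFrac 𝒜 K A → A ≤ toFun A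
  mono : ∀ A B, A ≠ 0 → B ≠ 0 → IsHomFrac 𝒜 K A → IsHomFrac 𝒜 K B → A ≤ B → toFun A ≤ toFun B
  idem : ∀ A, A ≠ 0 → IsHomFrac 𝒜 K A → toFun (toFun A) = toFun A

/-- A classical star operation on the domain `R`. -/
structure StarOp (R : Type*) [CommRing R] [IsDomain R]
    (K : Type*) [Field K] [Algebra R K] [IsFractionRing R K] where
  toFun : FractionalIdeal (nonZeroDivisors R) K → FractionalIdeal (nonZeroDivisors R) K
  map_span : ∀ x : K, x ≠ 0 →
    toFun (spanSingleton (nonZeroDivisors R) x) = spanSingleton (nonZeroDivisors R) x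
  map_smul : ∀ x : K, x ≠ 0 → ∀ A, A ≠ 0 →
    toFun (spanSingleton (nonZeroDivisors R) x * A) = spanSingleton (nonZeroDivisors R) x * toFun A
  le_star : ∀ A, A ≠ 0 → A ≤ toFun A
  mono : ∀ A B, A ≠ 0 → B ≠ 0 → A ≤ B → toFun A ≤ toFun B
  idem : ∀ A, A ≠ 0 → toFun (toFun A) = toFun A

section EStar

variable {Γ : Type*} [AddCommMonoid Γ] [LinearOrder Γ] [IsOrderedCancelAddMonoid Γ] [DecidableEq Γ]
  {R : Type*} [CommRing R] [IsDomain R]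
  (𝒜 : Γ → AddSubgroup R) [GradedRing 𝒜]
  (K : Type*) [Field K] [Algebra R K] [IsFractionRing R K]

/-- The submodule `⋂ { z⁻¹ (C(zA))^⋆ : 0 ≠ z ∈ (R : A) }`. -/
def eStarSub (s : HomStarOp 𝒜 K) (A : FractionalIdeal (nonZeroDivisors R) K) : Submodule R K :=
  ⨅ z ∈ {z : K | z ≠ 0 ∧ spanSingleton (nonZeroDivisors R) z * A ≤ 1},
    ↑(spanSingleton (nonZeroDivisors R) z⁻¹ *
      s.toFun (Cfrac 𝒜 K (spanSingleton (nonZeroDivisors R) z * A)))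

/-- The extension `e(⋆)` of a homogeneous star operation `⋆`,
`A^{e(⋆)} := ⋂ { z⁻¹ (C(zA))^⋆ : 0 ≠ z ∈ (R : A) }` (which is a fractional ideal whenever
`A` is a nonzero fractional ideal). -/
noncomputable def eStar (s : HomStarOp 𝒜 K) (A : FractionalIdeal (nonZeroDivisors R) K) :
    FractionalIdeal (nonZeroDivisors R) K :=
  if h : IsFractional (nonZeroDivisors R) (eStarSub 𝒜 K s A) then ⟨_, h⟩ else 0

end EStar

section SpanSingleton

variable {R : Type*} [CommRing R] [IsDomain R] {K : Type*} [Field K] [Algebra R K]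
  [IsFractionRing R K]

theorem spanSingleton_inv_mul_cancel_left {z : K} (hz : z ≠ 0)
    (A : FractionalIdeal (nonZeroDivisors R) K) :
    spanSingleton _ z⁻¹ * (spanSingleton _ z * A) = A := by
  rw [← mul_assoc, ← spanSingleton_inv, spanSingleton_inv_mul K hz, one_mul]

theorem spanSingleton_mul_ne_zero {z : K} (hz : z ≠ 0)
    {A : FractionalIdeal (nonZeroDivisors R) K} (hA : A ≠ 0) :
    spanSingleton (nonZeroDivisors R) z * A ≠ 0 := fun h =>
  hA (by rw [← spanSingleton_inv_mul_cancel_left hz A, h, mul_zero])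

theorem exists_spanSingleton_mul_le_one (A : FractionalIdeal (nonZeroDivisors R) K) :
    ∃ z : K, z ≠ 0 ∧ spanSingleton _ z * A ≤ 1 :=
  ⟨algebraMap R K A.den, IsFractionRing.to_map_ne_zero_of_mem_nonZeroDivisors A.den.2,
    (den_mul_self_eq_num' _ K A).symm ▸ coeIdeal_le_one⟩

theorem StarOp.toFun_eq_spanSingleton_inv_mul (t : StarOp R K) {z : K} (hz : z ≠ 0)
    {A : FractionalIdeal (nonZeroDivisors R) K} (hA : A ≠ 0) :
    t.toFun A = spanSingleton _ z⁻¹ * t.toFun (spanSingleton _ z * A) := by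
  rw [t.map_smul z hz A hA, spanSingleton_inv_mul_cancel_left hz]

end SpanSingleton

section IdealOf

variable {R : Type*} [CommRing R] {K : Type*} [Field K] [Algebra R K] [IsFractionRing R K]

theorem idealOf_coeIdeal (I : Ideal R) :
    idealOf K (I : FractionalIdeal (nonZeroDivisors R) K) = I :=
  Submodule.comap_map_eq_of_injective (IsFractionRing.injective R K) I

theorem coeIdeal_idealOf {J : FractionalIdeal (nonZeroDivisors R) K} (hJ : J ≤ 1) :
    (idealOf K J : FractionalIdeal (nonZeroDivisors R) K) = J := by
  obtain ⟨I, rfl⟩ := le_one_iff_exists_coeIdeal.mp hJ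
  rw [idealOf_coeIdeal]

end IdealOf

section Graded

variable {Γ : Type*} [AddCommMonoid Γ] [DecidableEq Γ] {R : Type*} [CommRing R]
  (𝒜 : Γ → AddSubgroup R) [GradedRing 𝒜]

theorem Ideal.IsHomogeneous.isHomIdeal {I : Ideal R} (h : I.IsHomogeneous 𝒜) :
    IsHomIdeal 𝒜 I := fun f hf γ => by
  rw [GradedRing.proj_apply]
  exact h γ hf

theorem homC_eq_homogeneousHull (I : Ideal R) :
    homC 𝒜 I = (I.homogeneousHull 𝒜).toIdeal := by
  refine congrArg Ideal.span (Set.ext fun x => ?_)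
  simp only [GradedRing.proj_apply, Set.mem_ofPred_eq, Subtype.exists, exists_prop]
  constructor
  · rintro ⟨f, hf, γ, rfl⟩
    exact ⟨γ, f, hf, rfl⟩
  · rintro ⟨γ, f, hf, rfl⟩
    exact ⟨f, hf, γ, rfl⟩

theorem le_homC (I : Ideal R) : I ≤ homC 𝒜 I :=
  homC_eq_homogeneousHull 𝒜 I ▸ I.le_toIdeal_homogeneousHull 𝒜

theorem isHomIdeal_homC (I : Ideal R) : IsHomIdeal 𝒜 (homC 𝒜 I) :=
  homC_eq_homogeneousHull 𝒜 I ▸ (I.homogeneousHull 𝒜).isHomogeneous.isHomIdeal 𝒜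

variable {K : Type*} [Field K] [Algebra R K] [IsFractionRing R K]

theorem le_Cfrac {J : FractionalIdeal (nonZeroDivisors R) K} (hJ : J ≤ 1) :
    J ≤ Cfrac 𝒜 K J := by
  conv_lhs => rw [← coeIdeal_idealOf hJ]
  exact (coeIdeal_le_coeIdeal K).mpr (le_homC 𝒜 _)

theorem isHomFrac_Cfrac (J : FractionalIdeal (nonZeroDivisors R) K) :
    IsHomFrac 𝒜 K (Cfrac 𝒜 K J) := by
  have : Nontrivial R := (IsFractionRing.nontrivial_iff_nontrivial R K).mpr inferInstance
  refine ⟨1, one_ne_zero, SetLike.isHomogeneousElem_one 𝒜, ?_, ?_⟩ <;>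
    rw [map_one, spanSingleton_one, one_mul]
  · exact coeIdeal_le_one
  · rw [Cfrac, idealOf_coeIdeal]
    exact isHomIdeal_homC 𝒜 _

theorem Cfrac_ne_zero {J : FractionalIdeal (nonZeroDivisors R) K} (hJ0 : J ≠ 0) (hJ : J ≤ 1) :
    Cfrac 𝒜 K J ≠ 0 :=
  fun h => hJ0 (FractionalIdeal.le_zero_iff.mp (h ▸ le_Cfrac 𝒜 hJ))

theorem StarOp.toFun_le_toFun_Cfrac [IsDomain R] (t : StarOp R K)
    {J : FractionalIdeal (nonZeroDivisors R) K} (hJ0 : J ≠ 0) (hJ : J ≤ 1) :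
    t.toFun J ≤ t.toFun (Cfrac 𝒜 K J) :=
  t.mono _ _ hJ0 (Cfrac_ne_zero 𝒜 hJ0 hJ) (le_Cfrac 𝒜 hJ)

end Graded

section EStar

variable {Γ : Type*} [AddCommMonoid Γ] [LinearOrder Γ] [IsOrderedCancelAddMonoid Γ] [DecidableEq Γ]
  {R : Type*} [CommRing R] [IsDomain R] {𝒜 : Γ → AddSubgroup R} [GradedRing 𝒜]
  {K : Type*} [Field K] [Algebra R K] [IsFractionRing R K]

theorem isFractional_eStarSub (s : HomStarOp 𝒜 K) (A : FractionalIdeal (nonZeroDivisors R) K) :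
    IsFractional (nonZeroDivisors R) (eStarSub 𝒜 K s A) := by
  obtain ⟨z, hz, hzA⟩ := exists_spanSingleton_mul_le_one A
  have : eStarSub 𝒜 K s A ≤
      ↑(spanSingleton (nonZeroDivisors R) z⁻¹ *
        s.toFun (Cfrac 𝒜 K (spanSingleton (nonZeroDivisors R) z * A))) :=
    iInf₂_le z ⟨hz, hzA⟩
  exact isFractional_of_le this

theorem coe_eStar (s : HomStarOp 𝒜 K) (A : FractionalIdeal (nonZeroDivisors R) K) :
    (eStar 𝒜 K s A : Submodule R K) = eStarSub 𝒜 K s A := by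
  have h : eStar 𝒜 K s A =
      (⟨_, isFractional_eStarSub s A⟩ : FractionalIdeal (nonZeroDivisors R) K) :=
    dif_pos _
  rw [h, coe_mk]

theorem le_eStar_iff {s : HomStarOp 𝒜 K} {A B : FractionalIdeal (nonZeroDivisors R) K} :
    B ≤ eStar 𝒜 K s A ↔ ∀ z : K, z ≠ 0 → spanSingleton _ z * A ≤ 1 →
      B ≤ spanSingleton _ z⁻¹ * s.toFun (Cfrac 𝒜 K (spanSingleton _ z * A)) := by
  rw [← coe_le_coe, coe_eStar, eStarSub, le_iInf₂_iff]
  simp only [Set.mem_ofPred_eq, and_imp, coe_le_coe]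

end EStar

/-- any classical star operation extending `⋆` is `≤ e(⋆)`. -/
theorem stmt_3
    {Γ : Type*} [AddCommMonoid Γ] [LinearOrder Γ] [IsOrderedCancelAddMonoid Γ] [DecidableEq Γ]
    {R : Type*} [CommRing R] [IsDomain R]
    (𝒜 : Γ → AddSubgroup R) [GradedRing 𝒜]
    (K : Type*) [Field K] [Algebra R K] [IsFractionRing R K]
    (s : HomStarOp 𝒜 K) (t : StarOp R K)
    (hext : ∀ A : FractionalIdeal (nonZeroDivisors R) K, A ≠ 0 → IsHomFrac 𝒜 K A →
      t.toFun A = s.toFun A) :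
    ∀ A : FractionalIdeal (nonZeroDivisors R) K, A ≠ 0 → t.toFun A ≤ eStar 𝒜 K s A := by
  intro A hA
  refine le_eStar_iff.mpr fun z hz hzA => ?_
  have hzA0 := spanSingleton_mul_ne_zero hz hA
  calc t.toFun A
      = spanSingleton _ z⁻¹ * t.toFun (spanSingleton _ z * A) :=
        t.toFun_eq_spanSingleton_inv_mul hz hA
    _ ≤ spanSingleton _ z⁻¹ * t.toFun (Cfrac 𝒜 K (spanSingleton _ z * A)) :=
        mul_right_mono (t.toFun_le_toFun_Cfrac 𝒜 hzA0 hzA)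
    _ = spanSingleton _ z⁻¹ * s.toFun (Cfrac 𝒜 K (spanSingleton _ z * A)) := by
        rw [hext _ (Cfrac_ne_zero 𝒜 hzA0 hzA) (isHomFrac_Cfrac 𝒜 _)]
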